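/- arXiv:2210.00675 — 2 statements merged into one kernel-verified Lean document; each statement's English description precedes it below -/
import Mathlib

section
/- Let $C \subseteq \mathbb{R}^d$ be compact with bounded gaps $\{G_n\}_{n=1}^\infty$ (ordered by non-increasing diameter) and unbounded gap $E$. For each $n$ set $\Lambda_n := \{ i \neq n : \mathrm{diam}(G_n) \leq \mathrm{diam}(G_i) \}$. Then $\tau(C) = \inf_{n \in \mathbb{N}} \mathrm{dist}\big(G_n, \bigcup_{i \in \Lambda_n} G_i \cup E\big)/\mathrm{diam}(G_n)$. -/
/-!
Gaps enumerated before `Gₙ` have diameter at least `diam Gₙ`, so each term of the ordered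
infimum dominates the corresponding term of `τ(C)`. Conversely, if `i > n` and
`diam Gᵢ ≥ diam Gₙ`, monotonicity forces `diam Gᵢ = diam Gₙ`; then
`dist (Gₙ, Gᵢ) / diam Gₙ = dist (Gᵢ, Gₙ) / diam Gᵢ` is already bounded below by the ordered term
at index `i`. Besides the ordering, only the symmetry of the distance enters, and the division
needs diameters that are finite (gaps are bounded) and nonzero (gaps are nonempty open sets).
-/

open Set
open scoped ENNReal Classical

noncomputable section

/-- `ℝ^d` with the Euclidean metric. -/
abbrev Euc (d : ℕ) := EuclideanSpace ℝ (Fin d)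

/-- `G` is a gap of `C`: an (open) path-connected component of the complement of `C`. -/
def IsGap {d : ℕ} (C G : Set (Euc d)) : Prop :=
  ∃ x ∈ Cᶜ, G = {y | JoinedIn Cᶜ x y}

/-- The bounded gaps of `C`. -/
def boundedGaps {d : ℕ} (C : Set (Euc d)) : Set (Set (Euc d)) :=
  {G | IsGap C G ∧ Bornology.IsBounded G}

/-- The union of all unbounded gaps of `C` (for `d = 1` this is the union of the two
unbounded intervals; for `d ≥ 2` it is the single unbounded component). -/
def unboundedGapsUnion {d : ℕ} (C : Set (Euc d)) : Set (Euc d) :=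
  ⋃₀ {G | IsGap C G ∧ ¬ Bornology.IsBounded G}

/-- Distance between two sets, as an extended nonnegative real. -/
def setEDist {d : ℕ} (s t : Set (Euc d)) : ℝ≥0∞ :=
  ⨅ x ∈ s, EMetric.infEdist x t

/-- The Falconer–Yavicoli thickness `τ(C)` of a set `C ⊆ ℝ^d`: the infimum, over all bounded
gaps `G`, of the distance from `G` to the union of all other gaps of diameter at least
`diam G` together with the unbounded gap, divided by `diam G`.  (For bounded gaps enumerated
with non-increasing diameters this agrees with the definition
`⨅ n, dist (Gₙ, G₁ ∪ ⋯ ∪ Gₙ₋₁ ∪ E) / diam Gₙ`.)  If `C` has no bounded gap, `τ(C)` is `∞`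
when `C` has non-empty interior and `0` otherwise. -/
def thickness {d : ℕ} (C : Set (Euc d)) : ℝ≥0∞ :=
  if (boundedGaps C).Nonempty then
    ⨅ G ∈ boundedGaps C,
      setEDist G
        ((⋃₀ {G' | G' ∈ boundedGaps C ∧ G' ≠ G ∧ EMetric.diam G ≤ EMetric.diam G'})
          ∪ unboundedGapsUnion C) / EMetric.diam G
  else if (interior C).Nonempty then ⊤ else 0

/-- The `ε`-thickness `τ_ε(C)`: infimum over bounded gaps `G` and boundary points `u` of `G`
of `dist (u, ⋃_{G' ∈ H_{ε,G}} G' ∪ E) / diam G`, where `H_{ε,G}` consists of the gaps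
`G' ≠ G` with `(1-ε) diam G < diam G'`. -/
def epsThickness {d : ℕ} (ε : ℝ) (C : Set (Euc d)) : ℝ≥0∞ :=
  ⨅ G ∈ boundedGaps C, ⨅ u ∈ frontier G,
    EMetric.infEdist u
      ((⋃₀ {G' | G' ∈ boundedGaps C ∧ G' ≠ G ∧
          ENNReal.ofReal (1 - ε) * EMetric.diam G < EMetric.diam G'})
        ∪ unboundedGapsUnion C) / EMetric.diam G

/-- The point of `ℝ^{2d}` whose first `d` coordinates are those of `y` and whose last `d`
coordinates are those of `z`. -/
def pairPoint {d : ℕ} (y z : Euc d) : Euc (2 * d) :=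
  WithLp.toLp 2 (fun i : Fin (2 * d) => if h : (i : ℕ) < d then y ⟨(i : ℕ), h⟩
           else z ⟨(i : ℕ) - d, by have := i.isLt; omega⟩)

/-- The product `C₁ × C₂ ⊆ ℝ^{2d}` of two subsets of `ℝ^d`. -/
def setProd {d : ℕ} (C₁ C₂ : Set (Euc d)) : Set (Euc (2 * d)) :=
  {p | ∃ y ∈ C₁, ∃ z ∈ C₂, p = pairPoint y z}

/-- The pinned distance set `Δ_x(A) = {|x - y| : y ∈ A}`. -/
def pinnedDist {m : ℕ} (x : Euc m) (A : Set (Euc m)) : Set ℝ :=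
  (fun y => dist x y) '' A

/-- The index `i` of `{1, …, d}` viewed inside `{1, …, 2d}` (first block). -/
def lo {d : ℕ} (i : Fin d) : Fin (2 * d) := ⟨(i : ℕ), by have := i.isLt; omega⟩

/-- The index `i + d` of `{1, …, 2d}` (second block). -/
def hi {d : ℕ} (i : Fin d) : Fin (2 * d) := ⟨(i : ℕ) + d, by have := i.isLt; omega⟩

/-- The map `g_{x,t} : ℝ^d → ℝ^d`, `g_{x,t}(y)_i = x_{i+d} + √(t²/d - (x_i - y_i)²)`. -/
def gMap {d : ℕ} (x : Euc (2 * d)) (t : ℝ) (y : Euc d) : Euc d :=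
  WithLp.toLp 2 (fun i => x (hi i) + Real.sqrt (t ^ 2 / (d : ℝ) - (x (lo i) - y i) ^ 2))

/-- `u` is a right endpoint of the gap `H`: a boundary point of `H` such that
`u + (ε, …, ε) ∉ H` for every `ε > 0`. -/
def IsRightEndpoint {d : ℕ} (H : Set (Euc d)) (u : Euc d) : Prop :=
  u ∈ frontier H ∧ ∀ ε > (0 : ℝ), ((WithLp.toLp 2 (fun i => u i + ε) : Euc d)) ∉ H

/-- A closed axis-parallel rectangle (box) in `ℝ^d`. -/
def IsClosedBox {d : ℕ} (R : Set (Euc d)) : Prop :=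
  ∃ a b : Fin d → ℝ, R = {y : Euc d | ∀ i, y i ∈ Set.Icc (a i) (b i)}

open Filter Topology

lemma setEDist_eq_iInf_infEDist {d : ℕ} (s t : Set (Euc d)) :
    setEDist s t = ⨅ x ∈ s, Metric.infEDist x t :=
  rfl

lemma setEDist_comm {d : ℕ} (s t : Set (Euc d)) : setEDist s t = setEDist t s := by
  simp only [setEDist_eq_iInf_infEDist, Metric.infEDist]
  rw [iInf₂_comm]
  simp only [edist_comm]

lemma setEDist_union {d : ℕ} (s t t' : Set (Euc d)) :
    setEDist s (t ∪ t') = setEDist s t ⊓ setEDist s t' := by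
  simp only [setEDist_eq_iInf_infEDist, Metric.infEDist_union, iInf_inf_eq]

lemma setEDist_iUnion {d : ℕ} {ι : Sort*} (s : Set (Euc d)) (t : ι → Set (Euc d)) :
    setEDist s (⋃ i, t i) = ⨅ i, setEDist s (t i) := by
  simp only [setEDist_eq_iInf_infEDist, Metric.infEDist_iUnion]
  exact (iInf_congr fun _ => iInf_comm).trans iInf_comm

lemma Metric.ediam_ne_zero_of_mem_nhds {X : Type*} [EMetricSpace X] {s : Set X} {x : X}
    [(𝓝[≠] x).NeBot] (hs : s ∈ 𝓝 x) : Metric.ediam s ≠ 0 := by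
  obtain ⟨y, hys, hyx⟩ := Filter.nonempty_of_mem
    (inter_mem (mem_nhdsWithin_of_mem_nhds hs) (self_mem_nhdsWithin : {x}ᶜ ∈ 𝓝[≠] x))
  rw [Ne, Metric.ediam_eq_zero_iff]
  exact fun hsub => hyx (hsub hys (mem_of_mem_nhds hs))

lemma IsGap.nonempty {d : ℕ} {C G : Set (Euc d)} (h : IsGap C G) : G.Nonempty := by
  obtain ⟨x, hx, rfl⟩ := h
  exact ⟨x, JoinedIn.refl hx⟩

lemma IsGap.isOpen {d : ℕ} {C G : Set (Euc d)} (hC : IsClosed C) (h : IsGap C G) : IsOpen G := by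
  obtain ⟨x, -, rfl⟩ := h
  exact hC.isOpen_compl.pathComponentIn x

theorem iInf_earlier_div_eq_iInf_larger_div {D : ℕ → ℝ≥0∞} (hD : Antitone D) (hD0 : ∀ n, D n ≠ 0)
    (hDtop : ∀ n, D n ≠ ⊤) {δ : ℕ → ℕ → ℝ≥0∞} (hδ : ∀ m n, δ m n = δ n m) (e : ℕ → ℝ≥0∞) :
    ⨅ n, ((⨅ (i) (_ : i < n), δ n i) ⊓ e n) / D n
      = ⨅ n, ((⨅ (i) (_ : i ≠ n ∧ D n ≤ D i), δ n i) ⊓ e n) / D n := by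
  refine le_antisymm (le_iInf fun n => ?_) (iInf_mono fun n => ?_)
  · set c := ⨅ n, ((⨅ (i) (_ : i < n), δ n i) ⊓ e n) / D n
    have hc : ∀ k, c ≤ ((⨅ (i) (_ : i < k), δ k i) ⊓ e k) / D k := iInf_le _
    rw [ENNReal.le_div_iff_mul_le (Or.inl (hD0 n)) (Or.inl (hDtop n))]
    refine le_inf (le_iInf₂ fun i hi => ?_) ?_
    · rcases hi.1.lt_or_gt with hin | hni
      · exact ENNReal.mul_le_of_le_div <| (hc n).trans <|
          ENNReal.div_le_div_right (inf_le_left.trans (iInf₂_le i hin)) _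
      · rw [← le_antisymm (hD hni.le) hi.2, hδ]
        exact ENNReal.mul_le_of_le_div <| (hc i).trans <|
          ENNReal.div_le_div_right (inf_le_left.trans (iInf₂_le n hni)) _
    · exact ENNReal.mul_le_of_le_div <| (hc n).trans <| ENNReal.div_le_div_right inf_le_right _
  · exact ENNReal.div_le_div_right
      (inf_le_inf_right _ (iInf₂_mono' fun i hi => ⟨i, ⟨hi.ne, hD hi.le⟩, le_rfl⟩)) _

lemma thickness_eq_iInf_of_range_eq {d : ℕ} {C : Set (Euc d)} {G : ℕ → Set (Euc d)}
    (hrange : range G = boundedGaps C) (hinj : Function.Injective G) :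
    thickness C = ⨅ n, setEDist (G n)
      ((⋃ (i) (_ : i ≠ n ∧ Metric.ediam (G n) ≤ Metric.ediam (G i)), G i)
        ∪ unboundedGapsUnion C) / Metric.ediam (G n) := by
  have hlarger : ∀ n, {G' | G' ∈ range G ∧ G' ≠ G n ∧
      Metric.ediam (G n) ≤ Metric.ediam G'} =
      G '' {i | i ≠ n ∧ Metric.ediam (G n) ≤ Metric.ediam (G i)} := by
    intro n
    ext A
    constructor
    · rintro ⟨⟨i, rfl⟩, hne, hle⟩
      exact ⟨i, ⟨fun h => hne (h ▸ rfl), hle⟩, rfl⟩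
    · rintro ⟨i, ⟨hne, hle⟩, rfl⟩
      exact ⟨mem_range_self i, hinj.ne hne, hle⟩
  rw [thickness, if_pos (hrange ▸ range_nonempty G), ← hrange, iInf_range]
  refine iInf_congr fun n => ?_
  have hunion := congrArg sUnion (hlarger n)
  rw [sUnion_image] at hunion
  simp only [mem_ofPred_eq] at hunion
  exact congrArg (fun s => setEDist (G n) (s ∪ unboundedGapsUnion C) / Metric.ediam (G n)) hunion

/-- If the bounded gaps of a compact set `C ⊆ ℝ^d` are enumerated as `G 0, G 1, …` with
non-increasing diameters, then the (order-dependent) quantity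
`⨅ n, dist (Gₙ, ⋃_{i < n} Gᵢ ∪ E) / diam Gₙ` defining the thickness agrees with `τ(C)`,
i.e. with `⨅ n, dist (Gₙ, ⋃_{i ∈ Λₙ} Gᵢ ∪ E) / diam Gₙ` where
`Λₙ = {i ≠ n : diam Gₙ ≤ diam Gᵢ}`. -/
theorem thickness_eq_ordered_inf
    {d : ℕ} (C : Set (Euc d)) (hC : IsCompact C)
    (G : ℕ → Set (Euc d))
    (hmem : ∀ n, G n ∈ boundedGaps C)
    (hinj : Function.Injective G)
    (hsurj : ∀ A ∈ boundedGaps C, ∃ n, G n = A)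
    (hanti : Antitone fun n => EMetric.diam (G n)) :
    (⨅ n : ℕ, setEDist (G n)
        ((⋃ i ∈ Finset.range n, G i) ∪ unboundedGapsUnion C) / EMetric.diam (G n))
      = thickness C := by
  have hrange : range G = boundedGaps C :=
    (range_subset_iff.2 hmem).antisymm fun A hA => hsurj A hA
  have : Nontrivial (Euc d) := by
    by_contra h
    rw [not_nontrivial_iff_subsingleton] at h
    exact zero_ne_one <| hinj <|
      (hmem 0).1.nonempty.eq_univ.trans (hmem 1).1.nonempty.eq_univ.symm
  have hD0 : ∀ n, Metric.ediam (G n) ≠ 0 := fun n =>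
    have ⟨x, hx⟩ := (hmem n).1.nonempty
    Metric.ediam_ne_zero_of_mem_nhds (((hmem n).1.isOpen hC.isClosed).mem_nhds hx)
  have hDtop : ∀ n, Metric.ediam (G n) ≠ ⊤ := fun n => (hmem n).2.ediam_ne_top
  rw [thickness_eq_iInf_of_range_eq hrange hinj]
  simp only [setEDist_union, setEDist_iUnion, Finset.mem_range]
  exact iInf_earlier_div_eq_iInf_larger_div hanti hD0 hDtop (fun m n => setEDist_comm (G m) (G n))
    fun n => setEDist (G n) (unboundedGapsUnion C)

end
end

section
/- Let $C_1, C_2 \subseteq \mathbb{R}^d$ be compact sets with $\tau(C_1) > 0$ and $\tau(C_2) > 0$. Then for every $x^1 \in C_1 \times C_2 \subseteq \mathbb{R}^{2d}$ and every integer $n \geq 2$, there exist points $x^2, \dots, x^n \in C_1 \times C_2$ such that for every coordinate $i \in \{1, \dots, 2d\}$, the real numbers $x_i^1, x_i^2, \dots, x_i^n$ are pairwise distinct. -/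
open Set
open scoped ENNReal Classical

noncomputable section

/-!
A closed set `C ⊆ ℝ^d` of positive thickness is not covered by finitely many coordinate
hyperplanes `{y | y i = a}`. If `C` has no bounded gap, it has interior points. Otherwise, start
at a point of a bounded gap that lies on none of the hyperplanes and move along a coordinate
axis: the line meets `C` at finitely many parameters only, so at the first place where it leaves
the gap it passes directly into a different gap. The two gaps then touch, which makes the
thickness zero.

Hence points of `C₁` and `C₂` avoiding all coordinate values used so far can be added one at a
time.
-/

section

variable {d : ℕ}

theorem exists_mem_forall_apply_notMem_of_isOpen {U : Set (Euc d)} (hU : IsOpen U)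
    (hne : U.Nonempty) {A : Fin d → Set ℝ} (hA : ∀ i, (A i).Countable) :
    ∃ y ∈ U, ∀ i, y i ∉ A i := by
  have hdense : Dense {y : Euc d | ∀ i, y i ∉ A i} := by
    have := (dense_pi univ fun i _ => (hA i).dense_compl ℝ).preimage
      (PiLp.homeomorph 2 fun _ : Fin d => ℝ).isOpenMap
    simp only [Set.pi, mem_univ, true_imp_iff, mem_compl_iff] at this
    exact this
  exact hdense.inter_open_nonempty U hU hne

theorem exists_Ioo_subset_Ioo_subset_of_finite {U V S : Set ℝ} (hU : IsOpen U) (hV : IsOpen V)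
    (hUV : Disjoint U V) (hS : S.Finite) (hcover : ∀ t ∉ S, t ∈ U ∨ t ∈ V) {a b : ℝ}
    (ha : a ∈ U) (hb : b ∈ V) (hab : a < b) :
    ∃ s, ∃ δ > 0, Ioo (s - δ) s ⊆ U ∧ Ioo s (s + δ) ⊆ V := by
  -- `s` is the first point of `V` to the right of `a`; no point of `S` other than `s` is near it.
  set s := sInf (V ∩ Ioi a)
  have hne : (V ∩ Ioi a).Nonempty := ⟨b, hb, hab⟩
  have hbdd : BddBelow (V ∩ Ioi a) := ⟨a, fun t ht => ht.2.le⟩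
  have hbelow : ∀ t, a < t → t < s → t ∉ V := fun t hat hts htV =>
    notMem_of_lt_csInf hts hbdd ⟨htV, hat⟩
  have has : a < s := by
    obtain ⟨u, hau, hu⟩ := exists_Ico_subset_of_mem_nhds (hU.mem_nhds ha) ⟨b, hab⟩
    refine lt_of_lt_of_le hau (le_csInf hne fun t ⟨htV, hat⟩ => ?_)
    by_contra! htu
    exact hUV.notMem_of_mem_left (hu ⟨hat.le, htu⟩) htV
  obtain ⟨δ₁, hδ₁, hball⟩ :=
    Metric.isOpen_iff.mp (hS.sdiff (t := {s})).isClosed.isOpen_compl s fun h => h.2 rfl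
  have hδ : 0 < min δ₁ (s - a) := lt_min hδ₁ (by linarith)
  have hnotS : ∀ t, t ≠ s → |t - s| < min δ₁ (s - a) → t ∉ S := fun t hts h htS =>
    hball (by rw [Metric.mem_ball, Real.dist_eq]; exact h.trans_le (min_le_left _ _)) ⟨htS, hts⟩
  refine ⟨s, _, hδ, fun t ⟨h₁, h₂⟩ => ?_, ?_⟩
  · refine (hcover t (hnotS t h₂.ne (by rw [abs_lt]; constructor <;> linarith))).resolve_right
      (hbelow t ?_ h₂)
    linarith [min_le_right δ₁ (s - a)]
  · have hright : Ioo s (s + min δ₁ (s - a)) ⊆ U ∪ V := fun t ⟨h₁, h₂⟩ =>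
      hcover t (hnotS t h₁.ne' (by rw [abs_lt]; constructor <;> linarith))
    refine (isPreconnected_Ioo.subset_or_subset hU hV hUV hright).resolve_left fun hsub => ?_
    obtain ⟨t, ⟨htV, hat⟩, hts⟩ := exists_lt_of_csInf_lt hne (lt_add_of_pos_right s hδ)
    rcases (csInf_le hbdd ⟨htV, hat⟩).lt_or_eq with hst | rfl
    · exact hUV.notMem_of_mem_left (hsub ⟨hst, hts⟩) htV
    · obtain ⟨l, hl, hlV⟩ := exists_Ioc_subset_of_mem_nhds (hV.mem_nhds htV) ⟨a, has⟩
      obtain ⟨c, hlc, hct⟩ := exists_between (max_lt hl has)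
      exact hbelow c (le_max_right l a |>.trans_lt hlc) hct
        (hlV ⟨le_max_left l a |>.trans_lt hlc, hct.le⟩)

theorem IsOpen.diff_pathComponentIn {X : Type*} [TopologicalSpace X] [LocallyPathConnectedSpace X]
    {F : Set X} (hF : IsOpen F) (x : X) : IsOpen (F \ pathComponentIn F x) :=
  isOpen_iff_forall_mem_open.2 fun y ⟨hyF, hyx⟩ =>
    ⟨pathComponentIn F y,
      fun _ hz => ⟨pathComponentIn_subset hz, fun hzx => hyx (hzx.trans hz.symm)⟩,
      hF.pathComponentIn y, mem_pathComponentIn_self hyF⟩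

theorem setEDist_eq_zero_of_mem_closure {s t : Set (Euc d)} {x : Euc d} (hs : x ∈ closure s)
    (ht : x ∈ closure t) : setEDist s t = 0 := by
  have hle : setEDist s t ≤ Metric.infEDist x s := by
    refine Metric.le_infEDist.2 fun p hp => ?_
    calc setEDist s t ≤ Metric.infEDist p t := iInf₂_le p hp
      _ ≤ Metric.infEDist x t + edist p x := Metric.infEDist_le_infEDist_add_edist
      _ = edist x p := by rw [Metric.mem_closure_iff_infEDist_zero.1 ht, zero_add, edist_comm]
  exact nonpos_iff_eq_zero.1 (hle.trans (Metric.mem_closure_iff_infEDist_zero.1 hs).le)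

theorem thickness_eq_zero_of_setEDist_eq_zero {C G : Set (Euc d)} (hG : G ∈ boundedGaps C)
    (h : setEDist G
      ((⋃₀ {G' | G' ∈ boundedGaps C ∧ G' ≠ G ∧ EMetric.diam G ≤ EMetric.diam G'})
        ∪ unboundedGapsUnion C) = 0) :
    thickness C = 0 := by
  rw [thickness, if_pos ⟨G, hG⟩]
  exact nonpos_iff_eq_zero.1 ((iInf₂_le G hG).trans_eq (by rw [h, ENNReal.zero_div]))

/-- Of two touching gaps, the bounded one of smaller diameter is at distance zero from the
other. -/
theorem thickness_eq_zero_of_mem_closure {C G G' : Set (Euc d)} (hG : G ∈ boundedGaps C)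
    (hG' : IsGap C G') (hne : G' ≠ G) {x : Euc d} (hx : x ∈ closure G) (hx' : x ∈ closure G') :
    thickness C = 0 := by
  by_cases hb : Bornology.IsBounded G'
  · rcases le_total (EMetric.diam G) (EMetric.diam G') with hle | hle
    · refine thickness_eq_zero_of_setEDist_eq_zero hG (setEDist_eq_zero_of_mem_closure hx ?_)
      exact closure_mono (fun y hy => Or.inl ⟨G', ⟨⟨hG', hb⟩, hne, hle⟩, hy⟩) hx'
    · refine thickness_eq_zero_of_setEDist_eq_zero ⟨hG', hb⟩
        (setEDist_eq_zero_of_mem_closure hx' ?_)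
      exact closure_mono (fun y hy => Or.inl ⟨G, ⟨hG, hne.symm, hle⟩, hy⟩) hx
  · refine thickness_eq_zero_of_setEDist_eq_zero hG (setEDist_eq_zero_of_mem_closure hx ?_)
    exact closure_mono (fun y hy => Or.inr ⟨G', ⟨hG', hb⟩, hy⟩) hx'

theorem exists_gap_ne_mem_closure_of_subset_hyperplanes {C G : Set (Euc d)} (hC : IsClosed C)
    (hG : G ∈ boundedGaps C) {A : Fin d → Set ℝ} (hA : ∀ i, (A i).Finite) (i₀ : Fin d)
    (hCA : ∀ y ∈ C, ∃ i, y i ∈ A i) :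
    ∃ G', IsGap C G' ∧ G' ≠ G ∧ ∃ x, x ∈ closure G ∧ x ∈ closure G' := by
  obtain ⟨⟨x₀, hx₀, rfl⟩, hGb⟩ := hG
  have hGo : IsOpen (pathComponentIn Cᶜ x₀) := hC.isOpen_compl.pathComponentIn x₀
  obtain ⟨y₀, hy₀G, hy₀A⟩ := exists_mem_forall_apply_notMem_of_isOpen hGo
    ⟨x₀, mem_pathComponentIn_self hx₀⟩ fun i => (hA i).countable
  set ρ : ℝ → Euc d := fun t => y₀ + t • EuclideanSpace.single i₀ 1
  have hρc : Continuous ρ := by fun_prop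
  set S : Set ℝ := (y₀ i₀ + ·) ⁻¹' A i₀
  have hS : S.Finite := (hA i₀).preimage (add_right_injective _).injOn
  have hρC : ∀ t ∉ S, ρ t ∈ Cᶜ := by
    intro t ht hρt
    obtain ⟨i, hi⟩ := hCA _ hρt
    by_cases h : i = i₀
    · subst h
      exact ht (by simpa [ρ, S] using hi)
    · exact hy₀A i (by simpa [ρ, h] using hi)
  obtain ⟨R, hR⟩ := hGb.subset_closedBall y₀
  obtain ⟨T, hTR, hTS⟩ := ((Ioi_infinite R).sdiff hS).nonempty
  have hR0 : 0 ≤ R := dist_self y₀ ▸ hR hy₀G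
  have hρT : ρ T ∉ pathComponentIn Cᶜ x₀ := fun h => by
    have hTle : |T| ≤ R := by simpa [ρ, norm_smul, PiLp.norm_single] using hR h
    exact (le_abs_self T).not_gt (hTle.trans_lt hTR)
  obtain ⟨s, δ, hδ, hleft, hright⟩ := exists_Ioo_subset_Ioo_subset_of_finite
    (hGo.preimage hρc) ((hC.isOpen_compl.diff_pathComponentIn x₀).preimage hρc)
    (disjoint_sdiff_right.preimage ρ) hS
    (fun t ht => (em _).imp id fun h => ⟨hρC t ht, h⟩)
    (by simpa [ρ] using hy₀G) ⟨hρC T hTS, hρT⟩ (hR0.trans_lt hTR)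
  have hmid : s + δ / 2 ∈ Ioo s (s + δ) := ⟨by linarith, by linarith⟩
  have hright' : ρ '' Ioo s (s + δ) ⊆ pathComponentIn Cᶜ (ρ (s + δ / 2)) :=
    ((convex_Ioo s (s + δ)).isPathConnected ⟨_, hmid⟩ |>.image hρc).subset_pathComponentIn
      (mem_image_of_mem ρ hmid) (image_subset_iff.2 fun t ht => (hright ht).1)
  refine ⟨_, ⟨_, (hright hmid).1, rfl⟩, fun h => (hright hmid).2 ?_, ρ s, ?_, ?_⟩
  · have := mem_pathComponentIn_self (hright hmid).1
    rwa [pathComponentIn, h] at this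
  · exact hρc.closure_preimage_subset _ (closure_mono hleft
      (closure_Ioo (sub_lt_self s hδ).ne ▸ ⟨(sub_lt_self s hδ).le, le_rfl⟩))
  · exact hρc.closure_preimage_subset _ (closure_mono (image_subset_iff.1 hright')
      (closure_Ioo (lt_add_of_pos_right s hδ).ne ▸ ⟨le_rfl, (lt_add_of_pos_right s hδ).le⟩))

def NotCoveredByCoordHyperplanes (C : Set (Euc d)) : Prop :=
  ∀ A : Fin d → Set ℝ, (∀ i, (A i).Finite) → ∃ y ∈ C, ∀ i, y i ∉ A i

theorem notCoveredByCoordHyperplanes_of_thickness_pos {C : Set (Euc d)} (hC : IsClosed C)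
    (hne : C.Nonempty) (hτ : 0 < thickness C) : NotCoveredByCoordHyperplanes C := by
  intro A hA
  rcases isEmpty_or_nonempty (Fin d) with hd | ⟨⟨i₀⟩⟩
  · obtain ⟨y, hy⟩ := hne
    exact ⟨y, hy, isEmptyElim⟩
  by_contra! hCA
  by_cases hgap : (boundedGaps C).Nonempty
  · obtain ⟨G, hG⟩ := hgap
    obtain ⟨G', hG', hne', x, hx, hx'⟩ :=
      exists_gap_ne_mem_closure_of_subset_hyperplanes hC hG hA i₀ hCA
    exact hτ.ne' (thickness_eq_zero_of_mem_closure hG hG' hne' hx hx')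
  · have hint : (interior C).Nonempty := by
      by_contra h
      simp [thickness, hgap, h] at hτ
    obtain ⟨y, hy, hyA⟩ := exists_mem_forall_apply_notMem_of_isOpen isOpen_interior hint
      fun i => (hA i).countable
    obtain ⟨i, hi⟩ := hCA y (interior_subset hy)
    exact hyA i hi

theorem injective_cons_apply {m : ℕ} {y : Euc d} {p : Fin m → Euc d} {i : Fin d}
    (hp : Function.Injective fun j => p j i) (hy : ∀ j, p j i ≠ y i) :
    Function.Injective fun j => (Fin.cons y p : Fin (m + 1) → Euc d) j i := by
  rw [show (fun j => (Fin.cons y p : Fin (m + 1) → Euc d) j i) = Fin.cons (y i) fun j => p j i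
    from Fin.comp_cons (fun v : Euc d => v i) y p]
  exact Fin.cons_injective_iff.2 ⟨fun ⟨j, hj⟩ => hy j hj, hp⟩

namespace NotCoveredByCoordHyperplanes

theorem exists_fin_injective_apply_notMem {C : Set (Euc d)} (hC : NotCoveredByCoordHyperplanes C)
    (m : ℕ) {A : Fin d → Set ℝ} (hA : ∀ i, (A i).Finite) :
    ∃ p : Fin m → Euc d, (∀ j, p j ∈ C) ∧
      ∀ i, Function.Injective (fun j => p j i) ∧ ∀ j, p j i ∉ A i := by
  induction m generalizing A with
  | zero =>
    exact ⟨finZeroElim, finZeroElim,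
      fun _ => ⟨Function.injective_of_subsingleton _, finZeroElim⟩⟩
  | succ m ih =>
    obtain ⟨y, hyC, hyA⟩ := hC A hA
    obtain ⟨p, hpC, hp⟩ := ih (A := fun i => insert (y i) (A i)) fun i => (hA i).insert _
    refine ⟨Fin.cons y p, Fin.cases hyC hpC, fun i => ⟨?_, Fin.cases (hyA i) fun j h => ?_⟩⟩
    · exact injective_cons_apply (hp i).1 fun j h => (hp i).2 j (Or.inl h)
    · exact (hp i).2 j (Or.inr h)

theorem exists_fin_injective_apply {C : Set (Euc d)} (hC : NotCoveredByCoordHyperplanes C)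
    {y : Euc d} (hy : y ∈ C) (m : ℕ) :
    ∃ p : Fin (m + 1) → Euc d, p 0 = y ∧ (∀ j, p j ∈ C) ∧
      ∀ i, Function.Injective (fun j => p j i) := by
  obtain ⟨p, hpC, hp⟩ := hC.exists_fin_injective_apply_notMem m (A := fun i => {y i})
    fun _ => finite_singleton _
  exact ⟨Fin.cons y p, rfl, Fin.cases hy hpC,
    fun i => injective_cons_apply (hp i).1 (hp i).2⟩

end NotCoveredByCoordHyperplanes

theorem injective_pairPoint_apply {m : ℕ} {p q : Fin m → Euc d}
    (hp : ∀ i, Function.Injective (fun j => p j i))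
    (hq : ∀ i, Function.Injective (fun j => q j i)) (i : Fin (2 * d)) :
    Function.Injective (fun j => pairPoint (p j) (q j) i) := by
  by_cases h : (i : ℕ) < d
  · simpa only [pairPoint, dif_pos h] using hp _
  · simpa only [pairPoint, dif_neg h] using hq _

/-- If `C₁, C₂ ⊆ ℝ^d` are compact with positive thickness, then given any
`x1 ∈ C₁ × C₂` and `n ≥ 2` one can find `x², …, xⁿ ∈ C₁ × C₂` such that in each of the
`2d` coordinates, the values of the `n` points are pairwise distinct. -/
theorem exists_points_no_shared_coordinates
    {d : ℕ} (C₁ C₂ : Set (Euc d)) (h₁ : IsCompact C₁) (h₂ : IsCompact C₂)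
    (hτ₁ : 0 < thickness C₁) (hτ₂ : 0 < thickness C₂)
    (x1 : Euc (2 * d)) (hx : x1 ∈ setProd C₁ C₂) (n : ℕ) (hn : 2 ≤ n) :
    ∃ p : Fin n → Euc (2 * d), p ⟨0, by omega⟩ = x1 ∧
      (∀ j, p j ∈ setProd C₁ C₂) ∧
      ∀ (i : Fin (2 * d)) (j k : Fin n), j ≠ k → p j i ≠ p k i := by
  obtain ⟨y, hy, z, hz, rfl⟩ := hx
  obtain ⟨m, rfl⟩ : ∃ m, n = m + 1 := ⟨n - 1, by omega⟩
  obtain ⟨p, hp0, hpC, hp⟩ := (notCoveredByCoordHyperplanes_of_thickness_pos h₁.isClosed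
    ⟨y, hy⟩ hτ₁).exists_fin_injective_apply hy m
  obtain ⟨q, hq0, hqC, hq⟩ := (notCoveredByCoordHyperplanes_of_thickness_pos h₂.isClosed
    ⟨z, hz⟩ hτ₂).exists_fin_injective_apply hz m
  refine ⟨fun j => pairPoint (p j) (q j), ?_, fun j => ⟨_, hpC j, _, hqC j, rfl⟩,
    fun i j k => (injective_pairPoint_apply hp hq i).ne⟩
  change pairPoint (p 0) (q 0) = _
  rw [hp0, hq0]

end
end
end
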